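/- (Normal form theorem for Hω proofs.) For all closed λ-terms M and N, if M =ω N then NF(M,N) holds, i.e. M =ω N is provable by a proof whose endpiece is in normal form. -/

import Mathlib

/-- Untyped λ-terms in de Bruijn representation. -/
inductive Lam : Type
  | var : ℕ → Lam
  | app : Lam → Lam → Lam
  | lam : Lam → Lam
deriving DecidableEq

namespace Lam

/-- Lift (shift) the free variables ≥ d by one. -/
def lift : ℕ → Lam → Lam
  | d, var n => if n < d then var n else var (n + 1)
  | d, app M N => app (lift d M) (lift d N)
  | d, lam M => lam (lift (d + 1) M)

/-- Capture-avoiding substitution of N for the free variable k. -/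
def subst : ℕ → Lam → Lam → Lam
  | k, N, var n => if n = k then N else if k < n then var (n - 1) else var n
  | k, N, app A B => app (subst k N A) (subst k N B)
  | k, N, lam M => lam (subst (k + 1) (lift 0 N) M)

/-- All free variables are < k. -/
def ClosedUnder : ℕ → Lam → Prop
  | k, var n => n < k
  | k, app A B => ClosedUnder k A ∧ ClosedUnder k B
  | k, lam M => ClosedUnder (k + 1) M

/-- A term is closed if it has no free variables. -/
def Closed (M : Lam) : Prop := ClosedUnder 0 M

/-- x occurs free in the term. -/
def FreeIn : ℕ → Lam → Prop
  | x, var n => n = x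
  | x, app A B => FreeIn x A ∨ FreeIn x B
  | x, lam M => FreeIn (x + 1) M

/-- The minimal number of abstractions needed to close the term. -/
def fvBound : Lam → ℕ
  | var n => n + 1
  | app A B => max (fvBound A) (fvBound B)
  | lam M => fvBound M - 1

/-- Iterated abstraction λz₁…zₙ.M. -/
def absN : ℕ → Lam → Lam
  | 0, M => M
  | n + 1, M => lam (absN n M)

/-- The λ-closure of a term: abstraction over all its free variables. -/
def close (M : Lam) : Lam := absN (fvBound M) M

/-- One-step β-reduction (closed under arbitrary contexts). -/
inductive Beta : Lam → Lam → Prop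
  | beta (U V) : Beta (app (lam U) V) (subst 0 V U)
  | appL {M M'} (N) : Beta M M' → Beta (app M N) (app M' N)
  | appR (M) {N N'} : Beta N N' → Beta (app M N) (app M N')
  | lam {M M'} : Beta M M' → Beta (lam M) (lam M')

/-- Many-step β-reduction. -/
def BetaStar : Lam → Lam → Prop := Relation.ReflTransGen Beta

/-- β-conversion. -/
def BetaConv : Lam → Lam → Prop := Relation.EqvGen Beta

def iComb : Lam := lam (var 0)
def omegaComb : Lam := lam (app (var 0) (var 0))
def Omega : Lam := app omegaComb omegaComb
def Kstar : Lam := lam (lam (var 0))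

/-- Apply a term to a list of arguments: M N₁ ⋯ Nₖ. -/
def appList : Lam → List Lam → Lam
  | M, [] => M
  | M, N :: Ns => appList (app M N) Ns

/-- A term is solvable iff its λ-closure applied to some closed terms β-converts to I. -/
def Solvable (M : Lam) : Prop :=
  ∃ Ns : List Lam, (∀ N ∈ Ns, Closed N) ∧ BetaConv (appList (close M) Ns) iComb

/-- One-step weak βΩ-reduction. -/
inductive WBO : Lam → Lam → Prop
  | wbeta (U V) : Closed (app (lam U) V) → WBO (app (lam U) V) (subst 0 V U)
  | womega (M) : Closed M → ¬ Solvable M → M ≠ Omega → WBO M Omega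
  | appL {M M'} (N) : WBO M M' → WBO (app M N) (app M' N)
  | appR (M) {N N'} : WBO N N' → WBO (app M N) (app M N')
  | lam {M M'} : WBO M M' → WBO (lam M) (lam M')

/-- Many-step weak βΩ-reduction. -/
def WBOStar : Lam → Lam → Prop := Relation.ReflTransGen WBO

/-- Weak βΩ-conversion. -/
def WBOConv : Lam → Lam → Prop := Relation.EqvGen WBO

/-- One-step full βΩ-reduction (Ω-contraction allowed on open terms,
unsolvability referring to the λ-closure). -/
inductive BO : Lam → Lam → Prop
  | beta (U V) : BO (app (lam U) V) (subst 0 V U)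
  | omega (M) : ¬ Solvable M → M ≠ Omega → BO M Omega
  | appL {M M'} (N) : BO M M' → BO (app M N) (app M' N)
  | appR (M) {N N'} : BO N N' → BO (app M N) (app M N')
  | lam {M M'} : BO M M' → BO (lam M) (lam M')

/-- Many-step full βΩ-reduction. -/
def BOStar : Lam → Lam → Prop := Relation.ReflTransGen BO

/-- Full βΩ-conversion. -/
def BOConv : Lam → Lam → Prop := Relation.EqvGen BO

/-- A term is in βΩ-normal form iff it admits no βΩ-reduction, i.e. it contains
no β-redex and no unsolvable subterm other than Ω. -/
def BONormal (M : Lam) : Prop := ∀ N, ¬ BO M N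

/-- Head weak β-reduction: contraction of the head redex
λx₁…xₙ.(λx.U)V M₁⋯Mₖ → λx₁…xₙ.([V/x]U)M₁⋯Mₖ with (λx.U)V closed. -/
inductive HeadWBeta : Lam → Lam → Prop
  | head (U V) : Closed (app (lam U) V) → HeadWBeta (app (lam U) V) (subst 0 V U)
  | app {M M'} (N) : (∀ U, M ≠ lam U) → HeadWBeta M M' → HeadWBeta (app M N) (app M' N)
  | lam {M M'} : HeadWBeta M M' → HeadWBeta (lam M) (lam M')

/-- The head variable of the term is the free variable x,
i.e. the term has the form λy₁…yᵣ. x X₁ ⋯ Xₘ. -/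
inductive HeadVar : ℕ → Lam → Prop
  | var (x) : HeadVar x (var x)
  | app {x M} (N) : (∀ U, M ≠ lam U) → HeadVar x M → HeadVar x (app M N)
  | lam {x M} : HeadVar (x + 1) M → HeadVar x (lam M)

/-- Subterm relation. -/
inductive Subterm : Lam → Lam → Prop
  | refl (M) : Subterm M M
  | appL {S M} (N) : Subterm S M → Subterm S (app M N)
  | appR (M) {S N} : Subterm S N → Subterm S (app M N)
  | lam {S M} : Subterm S M → Subterm S (lam M)

/-- A closed term is in weak βΩ head normal form iff it is unsolvable and equal
to Ω, or solvable and without a head weak β-redex. -/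
def WHnf (M : Lam) : Prop :=
  (¬ Solvable M ∧ M = Omega) ∨ (Solvable M ∧ ∀ N, ¬ HeadWBeta M N)

/-- Equality in the theory Hω. -/
inductive HOmega : Lam → Lam → Prop
  | refl (M) : Closed M → HOmega M M
  | wbetaL (U N) : Closed (app (lam U) N) → HOmega (app (lam U) N) (subst 0 N U)
  | wbetaR (U N) : Closed (app (lam U) N) → HOmega (subst 0 N U) (app (lam U) N)
  | unsolvL (M) : Closed M → ¬ Solvable M → HOmega M Omega
  | unsolvR (M) : Closed M → ¬ Solvable M → HOmega Omega M
  | leibnitz (X Y M N) : ClosedUnder 1 X → ClosedUnder 1 Y → Closed M → Closed N →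
      HOmega (subst 0 M X) (subst 0 M Y) → HOmega M N →
      HOmega (subst 0 N X) (subst 0 N Y)
  | omega_rule (P Q) : Closed P → Closed Q →
      (∀ M, Closed M → HOmega (app P M) (app Q M)) → HOmega P Q

/-- The n-fold application fⁿ z in the Church numeral. -/
def churchBody : ℕ → Lam
  | 0 => var 0
  | n + 1 => app (var 1) (churchBody n)

/-- The n-th Church numeral. -/
def church (n : ℕ) : Lam := lam (lam (churchBody n))


/-- NFₜ(M,N): M =ω N is provable by a proof whose endpiece is in normal form with
a chain of length t.  (The witnessing function `f` skolemizes the existential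
"for every closed L there is some t' with NF_{t'}(P L, Q L)" in the clause OM(P,Q).) -/
inductive NF : ℕ → Lam → Lam → Prop
  | base (M N) : Closed M → Closed N → WBOConv M N → NF 0 M N
  | step (t M N M₁ P₁ Q₁) : Closed M → Closed N → Closed M₁ → Closed P₁ → Closed Q₁ →
      WBOConv M (app M₁ P₁) →
      (f : Lam → ℕ) →
      (∀ L, Closed L → NF (f L) (app P₁ L) (app Q₁ L)) →
      NF t (app M₁ Q₁) N → NF (t + 1) M N

/-! ### Auxiliary lemmas -/

lemma closedUnder_mono : ∀ (M : Lam) {k k' : ℕ}, k ≤ k' → ClosedUnder k M → ClosedUnder k' M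
  | var n, k, k', h, hm => lt_of_lt_of_le hm h
  | app A B, k, k', h, hm =>
      ⟨closedUnder_mono A h hm.1, closedUnder_mono B h hm.2⟩
  | lam M, k, k', h, hm => closedUnder_mono M (Nat.succ_le_succ h) hm

lemma lift_closedUnder : ∀ (M : Lam) (d : ℕ) {k : ℕ},
    ClosedUnder k M → ClosedUnder (k + 1) (lift d M) := by
  intro M
  induction M with
  | var n =>
    intro d k hm
    simp only [lift]
    by_cases hd : n < d
    · simpa [hd, ClosedUnder] using Nat.lt_succ_of_lt hm
    · simpa [hd, ClosedUnder] using Nat.succ_lt_succ hm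
  | app A B ihA ihB =>
    intro d k hm
    exact ⟨ihA d hm.1, ihB d hm.2⟩
  | lam M ih =>
    intro d k hm
    exact ih (d + 1) hm

lemma subst_closedUnder : ∀ (M : Lam) {k : ℕ} (N : Lam),
    ClosedUnder (k + 1) M → ClosedUnder k N → ClosedUnder k (subst k N M) := by
  intro M
  induction M with
  | var n =>
    intro k N hm hn
    simp only [subst]
    by_cases h1 : n = k
    · simpa [h1] using hn
    · have hm' : n < k + 1 := hm
      have h2 : ¬ k < n := by omega
      have : n < k := by omega
      simpa [h1, h2, ClosedUnder] using this
  | app A B ihA ihB =>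
    intro k N hm hn
    exact ⟨ihA N hm.1 hn, ihB N hm.2 hn⟩
  | lam M ih =>
    intro k N hm hn
    exact ih (lift 0 N) hm (lift_closedUnder N 0 hn)

lemma subst_of_closedUnder : ∀ (M : Lam) {k : ℕ} (N : Lam),
    ClosedUnder k M → subst k N M = M := by
  intro M
  induction M with
  | var n =>
    intro k N hm
    have h1 : n ≠ k := by have : n < k := hm; omega
    have h2 : ¬ k < n := by have : n < k := hm; omega
    simp [subst, h1, h2]
  | app A B ihA ihB =>
    intro k N hm
    simp [subst, ihA N hm.1, ihB N hm.2]
  | lam M ih =>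
    intro k N hm
    simp [subst, ih (lift 0 N) hm]

lemma closed_iComb : Closed iComb := by
  simp [Closed, iComb, ClosedUnder]

lemma closed_Omega : Closed Omega := by
  simp [Closed, Omega, omegaComb, ClosedUnder]

lemma wboconv_appL {M M'} (N : Lam) (h : WBOConv M M') :
    WBOConv (app M N) (app M' N) := by
  induction h with
  | rel a b hab => exact Relation.EqvGen.rel _ _ (WBO.appL N hab)
  | refl a => exact Relation.EqvGen.refl _
  | symm a b _ ih => exact Relation.EqvGen.symm _ _ ih
  | trans a b c _ _ ih1 ih2 => exact Relation.EqvGen.trans _ _ _ ih1 ih2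

lemma wboconv_appR (M : Lam) {N N'} (h : WBOConv N N') :
    WBOConv (app M N) (app M N') := by
  induction h with
  | rel a b hab => exact Relation.EqvGen.rel _ _ (WBO.appR M hab)
  | refl a => exact Relation.EqvGen.refl _
  | symm a b _ ih => exact Relation.EqvGen.symm _ _ ih
  | trans a b c _ _ ih1 ih2 => exact Relation.EqvGen.trans _ _ _ ih1 ih2

lemma nf_closed {t M N} (h : NF t M N) : Closed M ∧ Closed N := by
  cases h with
  | base M N hM hN _ => exact ⟨hM, hN⟩
  | step t M N M₁ P₁ Q₁ hM hN => exact ⟨hM, hN⟩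

/-- Glue a weak βΩ-conversion on the left of an NF chain. -/
lemma nf_conv_left {t M N A} (hA : Closed A) (hc : WBOConv A M) (h : NF t M N) :
    NF t A N := by
  cases h with
  | base M N hM hN hconv =>
    exact NF.base A N hA hN (Relation.EqvGen.trans _ _ _ hc hconv)
  | step t M N M₁ P₁ Q₁ hM hN hM₁ hP₁ hQ₁ hconv f hf hrest =>
    exact NF.step t A N M₁ P₁ Q₁ hA hN hM₁ hP₁ hQ₁
      (Relation.EqvGen.trans _ _ _ hc hconv) f hf hrest

/-- Transitivity of NF (with existential chain length). -/
lemma nf_trans : ∀ {t M N}, NF t M N → ∀ {s K}, NF s N K → ∃ u, NF u M K := by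
  intro t M N h
  induction h with
  | base M N hM hN hconv =>
    intro s K h2
    exact ⟨s, nf_conv_left hM hconv h2⟩
  | step t M N M₁ P₁ Q₁ hM hN hM₁ hP₁ hQ₁ hconv f hf hrest ihf ih =>
    intro s K h2
    obtain ⟨u, hu⟩ := ih h2
    exact ⟨u + 1, NF.step u M K M₁ P₁ Q₁ hM (nf_closed h2).2 hM₁ hP₁ hQ₁ hconv f hf hu⟩

lemma om_skolem {P Q : Lam} (h : ∀ L, Closed L → ∃ s, NF s (app P L) (app Q L)) :
    ∃ f : Lam → ℕ, ∀ L, Closed L → NF (f L) (app P L) (app Q L) := by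
  classical
  refine ⟨fun L => if hc : Closed L then (h L hc).choose else 0, fun L hc => ?_⟩
  simp only [dif_pos hc]
  exact (h L hc).choose_spec

/-- Append one step at the end of an NF chain. -/
lemma nf_append : ∀ {t A C}, NF t A C → ∀ {K P Q B}, Closed K → Closed P → Closed Q →
    Closed B → WBOConv C (app K P) →
    (∀ L, Closed L → ∃ s, NF s (app P L) (app Q L)) →
    WBOConv (app K Q) B → NF (t + 1) A B := by
  intro t A C h
  induction h with
  | base A C hA hC hconv =>
    intro K P Q B hK hP hQ hB hc1 hOM hc2
    obtain ⟨f, hf⟩ := om_skolem hOM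
    exact NF.step 0 A B K P Q hA hB hK hP hQ
      (Relation.EqvGen.trans _ _ _ hconv hc1) f hf
      (NF.base _ _ ⟨hK, hQ⟩ hB hc2)
  | step t A C M₁ P₁ Q₁ hA hC hM₁ hP₁ hQ₁ hconv f hf hrest ihf ih =>
    intro K P Q B hK hP hQ hB hc1 hOM hc2
    exact NF.step (t + 1) A B M₁ P₁ Q₁ hA hB hM₁ hP₁ hQ₁ hconv f hf
      (ih hK hP hQ hB hc1 hOM hc2)

/-- Symmetry of NF (with existential chain length). -/
lemma nf_symm : ∀ {t M N}, NF t M N → ∃ s, NF s N M := by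
  intro t M N h
  induction h with
  | base M N hM hN hconv =>
    exact ⟨0, NF.base N M hN hM (Relation.EqvGen.symm _ _ hconv)⟩
  | step t M N M₁ P₁ Q₁ hM hN hM₁ hP₁ hQ₁ hconv f hf hrest ihf ih =>
    obtain ⟨s, hs⟩ := ih
    refine ⟨s + 1, nf_append hs hM₁ hQ₁ hP₁ hM (Relation.EqvGen.refl _) ihf
      (Relation.EqvGen.symm _ _ hconv)⟩

/-- Apply both sides of an NF chain to a closed argument. -/
lemma nf_app_fun : ∀ {t M N}, NF t M N → ∀ {L}, Closed L → NF t (app M L) (app N L) := by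
  intro t M N h
  induction h with
  | base M N hM hN hconv =>
    intro L hL
    exact NF.base _ _ ⟨hM, hL⟩ ⟨hN, hL⟩ (wboconv_appL L hconv)
  | step t M N M₁ P₁ Q₁ hM hN hM₁ hP₁ hQ₁ hconv f hf hrest ihf ih =>
    intro L hL
    set M₁' : Lam := lam (app (app M₁ (var 0)) L) with hM₁'def
    have hM₁'c : Closed M₁' :=
      (⟨⟨closedUnder_mono M₁ (Nat.zero_le 1) hM₁, Nat.zero_lt_one⟩,
        closedUnder_mono L (Nat.zero_le 1) hL⟩ : ClosedUnder 1 (app (app M₁ (var 0)) L))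
    have hsub : ∀ R : Lam, Closed R →
        subst 0 R (app (app M₁ (var 0)) L) = app (app M₁ R) L := by
      intro R hR
      simp [subst, subst_of_closedUnder M₁ R hM₁, subst_of_closedUnder L R hL]
    have hbP : WBO (app M₁' P₁) (app (app M₁ P₁) L) := by
      have := WBO.wbeta (app (app M₁ (var 0)) L) P₁ ⟨hM₁'c, hP₁⟩
      rwa [hsub P₁ hP₁] at this
    have hbQ : WBO (app M₁' Q₁) (app (app M₁ Q₁) L) := by
      have := WBO.wbeta (app (app M₁ (var 0)) L) Q₁ ⟨hM₁'c, hQ₁⟩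
      rwa [hsub Q₁ hQ₁] at this
    refine NF.step t (app M L) (app N L) M₁' P₁ Q₁ ⟨hM, hL⟩ ⟨hN, hL⟩ hM₁'c hP₁ hQ₁
      ?_ f hf ?_
    · exact Relation.EqvGen.trans _ _ _ (wboconv_appL L hconv)
        (Relation.EqvGen.symm _ _ (Relation.EqvGen.rel _ _ hbP))
    · exact nf_conv_left ⟨hM₁'c, hQ₁⟩ (Relation.EqvGen.rel _ _ hbQ) (ih hL)

/-- Apply a closed function to both sides of an NF chain. -/
lemma nf_app_arg : ∀ {t M N}, NF t M N → ∀ {F}, Closed F → NF t (app F M) (app F N) := by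
  intro t M N h
  induction h with
  | base M N hM hN hconv =>
    intro F hF
    exact NF.base _ _ ⟨hF, hM⟩ ⟨hF, hN⟩ (wboconv_appR F hconv)
  | step t M N M₁ P₁ Q₁ hM hN hM₁ hP₁ hQ₁ hconv f hf hrest ihf ih =>
    intro F hF
    set M₁' : Lam := lam (app F (app M₁ (var 0))) with hM₁'def
    have hM₁'c : Closed M₁' :=
      (⟨closedUnder_mono F (Nat.zero_le 1) hF,
        closedUnder_mono M₁ (Nat.zero_le 1) hM₁, Nat.zero_lt_one⟩ :
        ClosedUnder 1 (app F (app M₁ (var 0))))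
    have hsub : ∀ R : Lam, Closed R →
        subst 0 R (app F (app M₁ (var 0))) = app F (app M₁ R) := by
      intro R hR
      simp [subst, subst_of_closedUnder M₁ R hM₁, subst_of_closedUnder F R hF]
    have hbP : WBO (app M₁' P₁) (app F (app M₁ P₁)) := by
      have := WBO.wbeta (app F (app M₁ (var 0))) P₁ ⟨hM₁'c, hP₁⟩
      rwa [hsub P₁ hP₁] at this
    have hbQ : WBO (app M₁' Q₁) (app F (app M₁ Q₁)) := by
      have := WBO.wbeta (app F (app M₁ (var 0))) Q₁ ⟨hM₁'c, hQ₁⟩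
      rwa [hsub Q₁ hQ₁] at this
    refine NF.step t (app F M) (app F N) M₁' P₁ Q₁ ⟨hF, hM⟩ ⟨hF, hN⟩ hM₁'c hP₁ hQ₁
      ?_ f hf ?_
    · exact Relation.EqvGen.trans _ _ _ (wboconv_appR F hconv)
        (Relation.EqvGen.symm _ _ (Relation.EqvGen.rel _ _ hbP))
    · exact nf_conv_left ⟨hM₁'c, hQ₁⟩ (Relation.EqvGen.rel _ _ hbQ) (ih hF)

/-- Normal form theorem for Hω proofs: every provable equation has a proof whose
endpiece is in normal form. -/
theorem homega_nf (M N : Lam) (hM : Closed M) (hN : Closed N) (h : HOmega M N) :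
    ∃ t, NF t M N := by
  clear hM hN
  induction h with
  | refl M hM =>
    exact ⟨0, NF.base M M hM hM (Relation.EqvGen.refl _)⟩
  | wbetaL U N hc =>
    have hs : Closed (subst 0 N U) := subst_closedUnder U N hc.1 hc.2
    exact ⟨0, NF.base _ _ hc hs (Relation.EqvGen.rel _ _ (WBO.wbeta U N hc))⟩
  | wbetaR U N hc =>
    have hs : Closed (subst 0 N U) := subst_closedUnder U N hc.1 hc.2
    exact ⟨0, NF.base _ _ hs hc
      (Relation.EqvGen.symm _ _ (Relation.EqvGen.rel _ _ (WBO.wbeta U N hc)))⟩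
  | unsolvL M hMc hMs =>
    by_cases hO : M = Omega
    · subst hO
      exact ⟨0, NF.base _ _ hMc hMc (Relation.EqvGen.refl _)⟩
    · exact ⟨0, NF.base _ _ hMc closed_Omega
        (Relation.EqvGen.rel _ _ (WBO.womega M hMc hMs hO))⟩
  | unsolvR M hMc hMs =>
    by_cases hO : M = Omega
    · subst hO
      exact ⟨0, NF.base _ _ hMc hMc (Relation.EqvGen.refl _)⟩
    · exact ⟨0, NF.base _ _ closed_Omega hMc
        (Relation.EqvGen.symm _ _ (Relation.EqvGen.rel _ _ (WBO.womega M hMc hMs hO)))⟩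
  | leibnitz X Y M N hX hY hMc hNc _ _ ih1 ih2 =>
    obtain ⟨t1, h1⟩ := ih1
    obtain ⟨t2, h2⟩ := ih2
    have hF : Closed (lam X) := hX
    have hG : Closed (lam Y) := hY
    have hsNX : Closed (subst 0 N X) := subst_closedUnder X N hX hNc
    have hsNY : Closed (subst 0 N Y) := subst_closedUnder Y N hY hNc
    have hsMX : Closed (subst 0 M X) := subst_closedUnder X M hX hMc
    have hsMY : Closed (subst 0 M Y) := subst_closedUnder Y M hY hMc
    -- β facts
    have bFN : WBO (app (lam X) N) (subst 0 N X) := WBO.wbeta X N ⟨hF, hNc⟩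
    have bFM : WBO (app (lam X) M) (subst 0 M X) := WBO.wbeta X M ⟨hF, hMc⟩
    have bGN : WBO (app (lam Y) N) (subst 0 N Y) := WBO.wbeta Y N ⟨hG, hNc⟩
    have bGM : WBO (app (lam Y) M) (subst 0 M Y) := WBO.wbeta Y M ⟨hG, hMc⟩
    -- NF (F M) (F N) and NF (G M) (G N)
    have aF : NF t2 (app (lam X) M) (app (lam X) N) := nf_app_arg h2 hF
    have aG : NF t2 (app (lam Y) M) (app (lam Y) N) := nf_app_arg h2 hG
    obtain ⟨s1, aF'⟩ := nf_symm aF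
    -- chain: subst N X ~ F N, NF (F N) (F M), F M ~ subst M X, NF (subst M X) (subst M Y),
    -- subst M Y ~ G M, NF (G M) (G N), G N ~ subst N Y
    have c1 : NF s1 (subst 0 N X) (app (lam X) M) :=
      nf_conv_left hsNX (Relation.EqvGen.symm _ _ (Relation.EqvGen.rel _ _ bFN)) aF'
    have c2 : NF t1 (app (lam X) M) (subst 0 M Y) :=
      nf_conv_left ⟨hF, hMc⟩ (Relation.EqvGen.rel _ _ bFM) h1
    have c3 : NF t2 (subst 0 M Y) (app (lam Y) N) :=
      nf_conv_left hsMY (Relation.EqvGen.symm _ _ (Relation.EqvGen.rel _ _ bGM)) aG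
    have c4 : NF 0 (app (lam Y) N) (subst 0 N Y) :=
      NF.base _ _ ⟨hG, hNc⟩ hsNY (Relation.EqvGen.rel _ _ bGN)
    obtain ⟨u1, d1⟩ := nf_trans c1 c2
    obtain ⟨u2, d2⟩ := nf_trans d1 c3
    exact nf_trans d2 c4
  | omega_rule P Q hP hQ _ ih =>
    obtain ⟨f, hf⟩ := om_skolem ih
    have hI : Closed iComb := closed_iComb
    have bP : WBO (app iComb P) P := by
      have := WBO.wbeta (var 0) P ⟨hI, hP⟩
      simpa [subst, iComb] using this
    have bQ : WBO (app iComb Q) Q := by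
      have := WBO.wbeta (var 0) Q ⟨hI, hQ⟩
      simpa [subst, iComb] using this
    exact ⟨1, NF.step 0 P Q iComb P Q hP hQ hI hP hQ
      (Relation.EqvGen.symm _ _ (Relation.EqvGen.rel _ _ bP)) f hf
      (NF.base _ _ ⟨hI, hQ⟩ hQ (Relation.EqvGen.rel _ _ bQ))⟩

end Lam
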